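/- Let G = C_{n_1} × ... × C_{n_k} with 1 < n_1 | ... | n_k, k ≥ 2, and n_{k−1} = n_k = n. For any element x of order n in the product AB of the last two factors, the quotient G/(P⟨x⟩) is cyclic of order n, where P is the product of the first k−2 factors. -/

import Mathlib

/-!
Write `x = a ^ s * b ^ t` with `a`, `b` the generators of the last two factors. The projection
onto these two factors maps `G` onto `(ℤ/n)²` with kernel `P`, and sends `x` to `(s, t)`; since
`x` has order `n`, the pair `(s, t)` generates the unit ideal of `ℤ/n`. Hence
`(y₁, y₂) ↦ t y₁ - s y₂` maps `(ℤ/n)²` onto `ℤ/n` with kernel exactly `⟨(s, t)⟩`, and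
`G / P⟨x⟩ ≅ ℤ/n`.
-/

/-- The abelian group with invariant factors `n 0 ∣ n 1 ∣ ... ∣ n (k-1)`. -/
abbrev IG (k : ℕ) (n : Fin k → ℕ) := ∀ i : Fin k, Multiplicative (ZMod (n i))

/-- The canonical generator of the `i`-th cyclic factor. -/
abbrev gen (k : ℕ) (n : Fin k → ℕ) (i : Fin k) : IG k n :=
  Pi.mulSingle i (Multiplicative.ofAdd (1 : ZMod (n i)))

open Multiplicative Subgroup

theorem IsCoprime.exists_mul_eq_of_mul_eq {R : Type*} [CommRing R] {u v y₁ y₂ : R}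
    (h : IsCoprime u v) (hy : v * y₁ = u * y₂) : ∃ r, r * u = y₁ ∧ r * v = y₂ := by
  obtain ⟨α, β, hαβ⟩ := h
  exact ⟨α * y₁ + β * y₂, by linear_combination y₁ * hαβ - β * hy,
    by linear_combination y₂ * hαβ + α * hy⟩

namespace ZMod

variable {N : ℕ}

theorem isCoprime_of_addOrderOf_eq [NeZero N] {u v : ZMod N} (h : addOrderOf (u, v) = N) :
    IsCoprime u v := by
  set d := Nat.gcd u.val v.val
  set g := Nat.gcd d N
  have hgN : g ∣ N := Nat.gcd_dvd_right d N
  have hg_val {a : ZMod N} (hga : g ∣ a.val) : (N / g) • a = 0 := by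
    obtain ⟨c, hc⟩ := hga
    rw [← natCast_zmod_val a, nsmul_eq_mul, ← Nat.cast_mul, hc, ← mul_assoc,
      Nat.div_mul_cancel hgN, Nat.cast_mul, natCast_self, zero_mul]
  have hkill : (N / g) • (u, v) = 0 := Prod.ext
    (hg_val ((Nat.gcd_dvd_left d N).trans (Nat.gcd_dvd_left _ _)))
    (hg_val ((Nat.gcd_dvd_left d N).trans (Nat.gcd_dvd_right _ _)))
  have hcop : d.Coprime N := by
    have hN := addOrderOf_dvd_of_nsmul_eq_zero hkill
    rw [h] at hN
    have := Nat.div_eq_self.mp (Nat.dvd_antisymm (Nat.div_dvd_of_dvd hgN) hN)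
    exact this.resolve_left (NeZero.ne N)
  obtain ⟨w, hw⟩ := (unitOfCoprime d hcop).isUnit.exists_left_inv
  have hd := congrArg (Int.cast : ℤ → ZMod N) (Nat.gcd_eq_gcd_ab u.val v.val)
  push_cast [natCast_zmod_val] at hd
  exact ⟨w * Nat.gcdA u.val v.val, w * Nat.gcdB u.val v.val, by
    rw [← hw]; simp only [coe_unitOfCoprime]; linear_combination w * hd.symm⟩

theorem mem_zmultiples_iff_of_isCoprime {w y : ZMod N × ZMod N} (h : IsCoprime w.1 w.2) :
    y ∈ AddSubgroup.zmultiples w ↔ w.2 * y.1 = w.1 * y.2 := by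
  constructor
  · rintro ⟨m, rfl⟩
    simp only [Prod.smul_fst, Prod.smul_snd]
    ring
  · intro hy
    obtain ⟨r, h₁, h₂⟩ := h.exists_mul_eq_of_mul_eq hy
    refine ⟨r.cast, Prod.ext ?_ ?_⟩ <;> simp [zsmul_eq_mul, *]

end ZMod

theorem isCyclic_and_card_quotient_of_ker_eq {G : Type*} [CommGroup G] {N : ℕ}
    (φ : G →* Multiplicative (ZMod N)) (hφ : Function.Surjective φ) {K : Subgroup G}
    (hK : φ.ker = K) : IsCyclic (G ⧸ K) ∧ Nat.card (G ⧸ K) = N := by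
  subst hK
  let e := QuotientGroup.quotientKerEquivOfSurjective φ hφ
  exact ⟨isCyclic_of_surjective e.symm e.symm.surjective,
    by rw [Nat.card_congr e.toEquiv, Nat.card_congr toAdd, Nat.card_zmod]⟩

theorem mem_zpowers_iff_toAdd_mem_zmultiples {A : Type*} [AddGroup A] {a b : Multiplicative A} :
    a ∈ zpowers b ↔ toAdd a ∈ AddSubgroup.zmultiples (toAdd b) := by
  simp only [mem_zpowers_iff, AddSubgroup.mem_zmultiples_iff]
  exact exists_congr fun m => by rw [← toAdd_zpow, toAdd.injective.eq_iff]

theorem isCyclic_and_card_quotient_ker_sup_zpowers {G : Type*} [CommGroup G] {N : ℕ} [NeZero N]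
    (p : G →* Multiplicative (ZMod N × ZMod N)) (hp : Function.Surjective p) {x : G}
    (hx : orderOf (p x) = N) :
    IsCyclic (G ⧸ (p.ker ⊔ zpowers x)) ∧ Nat.card (G ⧸ (p.ker ⊔ zpowers x)) = N := by
  set w := toAdd (p x)
  obtain ⟨α, β, hαβ⟩ : IsCoprime w.1 w.2 :=
    ZMod.isCoprime_of_addOrderOf_eq (by rwa [← orderOf_ofAdd_eq_addOrderOf])
  let φ : G →* Multiplicative (ZMod N) := MonoidHom.mk'
    (fun y => ofAdd (w.2 * (toAdd (p y)).1 - w.1 * (toAdd (p y)).2))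
    (fun y z => by
      simp only [map_mul, toAdd_mul, Prod.fst_add, Prod.snd_add, ← ofAdd_add]
      congr 1
      ring)
  refine isCyclic_and_card_quotient_of_ker_eq φ (fun z => ?_) ?_
  · obtain ⟨y, hy⟩ := hp (ofAdd (β * toAdd z, -(α * toAdd z)))
    refine ⟨y, toAdd.injective ?_⟩
    simp only [φ, MonoidHom.mk'_apply, hy, toAdd_ofAdd]
    linear_combination toAdd z * hαβ
  · ext y
    rw [MonoidHom.mem_ker, sup_comm, ← comap_map_eq, mem_comap, MonoidHom.map_zpowers,
      mem_zpowers_iff_toAdd_mem_zmultiples, ZMod.mem_zmultiples_iff_of_isCoprime ⟨α, β, hαβ⟩]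
    simp [φ, div_eq_one]

section IG

variable {k : ℕ} {n : Fin k → ℕ}

theorem mulSingle_mem_zpowers_gen (i : Fin k) (a : Multiplicative (ZMod (n i))) :
    Pi.mulSingle i a ∈ zpowers (gen k n i) :=
  ⟨(toAdd a).cast, by simp [gen, ← Pi.mulSingle_zpow, ← ofAdd_zsmul]⟩

theorem mem_closure_gen_iff {S : Set (Fin k)} {y : IG k n} :
    y ∈ Subgroup.closure (gen k n '' S) ↔ ∀ i ∉ S, y i = 1 := by
  constructor
  · have hle : Subgroup.closure (gen k n '' S) ≤ Subgroup.pi Sᶜ fun _ => ⊥ := by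
      rw [closure_le]
      rintro _ ⟨j, hj, rfl⟩ i hi
      simp [Pi.mulSingle_eq_of_ne (ne_of_mem_of_not_mem hj hi).symm]
    exact fun hy i hi => by simpa using hle hy i hi
  · intro hy
    refine pi_mem_of_mulSingle_mem y fun i => ?_
    by_cases hi : i ∈ S
    · exact zpowers_le.2 (subset_closure (Set.mem_image_of_mem _ hi))
        (mulSingle_mem_zpowers_gen i (y i))
    · simp [hy i hi]

variable {i₁ i₂ : Fin k} {N : ℕ}

def projPair (h₁ : n i₁ = N) (h₂ : n i₂ = N) : IG k n →* Multiplicative (ZMod N × ZMod N) :=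
  MonoidHom.mk' (fun y => ofAdd (ZMod.ringEquivCongr h₁ (toAdd (y i₁)),
    ZMod.ringEquivCongr h₂ (toAdd (y i₂)))) fun y z => by
      simp only [Pi.mul_apply, toAdd_mul, map_add]; rfl

variable (h₁ : n i₁ = N) (h₂ : n i₂ = N)

theorem projPair_eq_one_iff {y : IG k n} : projPair h₁ h₂ y = 1 ↔ y i₁ = 1 ∧ y i₂ = 1 := by
  simp [projPair]

theorem projPair_surjective (hne : i₁ ≠ i₂) : Function.Surjective (projPair h₁ h₂) := by
  intro z
  refine ⟨Pi.mulSingle i₁ (ofAdd ((ZMod.ringEquivCongr h₁).symm (toAdd z).1)) *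
    Pi.mulSingle i₂ (ofAdd ((ZMod.ringEquivCongr h₂).symm (toAdd z).2)), ?_⟩
  simp [projPair, Pi.mulSingle_eq_of_ne hne, Pi.mulSingle_eq_of_ne hne.symm]

theorem ker_projPair :
    (projPair h₁ h₂).ker = Subgroup.closure (gen k n '' {j | j ≠ i₁ ∧ j ≠ i₂}) := by
  ext y
  rw [MonoidHom.mem_ker, projPair_eq_one_iff, mem_closure_gen_iff]
  simp only [Set.mem_ofPred_eq, not_and_or, not_not, or_imp, forall_and, forall_eq]

theorem orderOf_projPair {x : IG k n} (hx : x ∈ Subgroup.closure {gen k n i₁, gen k n i₂}) :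
    orderOf (projPair h₁ h₂ x) = orderOf x := by
  refine dvd_antisymm (orderOf_map_dvd _ x) (orderOf_dvd_of_pow_eq_one ?_)
  set m := orderOf (projPair h₁ h₂ x)
  have hpair : (x ^ m) i₁ = 1 ∧ (x ^ m) i₂ = 1 := by
    rw [← projPair_eq_one_iff h₁ h₂, map_pow, pow_orderOf_eq_one]
  have hrest : ∀ i ∉ ({i₁, i₂} : Set (Fin k)), (x ^ m) i = 1 := by
    rw [← mem_closure_gen_iff, Set.image_pair]
    exact pow_mem hx m
  funext i
  by_cases hi : i = i₁ ∨ i = i₂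
  · rcases hi with rfl | rfl
    exacts [hpair.1, hpair.2]
  · exact hrest i hi

end IG

theorem stmt_16 (k : ℕ) (hk : 2 ≤ k) (n : Fin k → ℕ) (nn : ℕ)
    (h1 : ∀ i, 1 < n i)
    (heq1 : n ⟨k - 2, by omega⟩ = nn) (heq2 : n ⟨k - 1, by omega⟩ = nn)
    (x : IG k n)
    (hx : x ∈ Subgroup.closure {gen k n ⟨k - 2, by omega⟩, gen k n ⟨k - 1, by omega⟩})
    (hord : orderOf x = nn) :
    IsCyclic (IG k n ⧸ (Subgroup.closure (gen k n '' {j : Fin k | (j : ℕ) < k - 2}) ⊔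
        Subgroup.zpowers x)) ∧
    Nat.card (IG k n ⧸ (Subgroup.closure (gen k n '' {j : Fin k | (j : ℕ) < k - 2}) ⊔
        Subgroup.zpowers x)) = nn := by
  have hne : (⟨k - 2, by omega⟩ : Fin k) ≠ ⟨k - 1, by omega⟩ := by
    simp only [ne_eq, Fin.mk.injEq]; omega
  have hfirst : {j : Fin k | (j : ℕ) < k - 2} =
      {j | j ≠ ⟨k - 2, by omega⟩ ∧ j ≠ ⟨k - 1, by omega⟩} := by
    ext j
    simp only [Set.mem_ofPred_eq, ne_eq, Fin.ext_iff]
    omega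
  have : NeZero nn := ⟨by have := h1 ⟨k - 2, by omega⟩; omega⟩
  rw [hfirst, ← ker_projPair heq1 heq2]
  exact isCyclic_and_card_quotient_ker_sup_zpowers _ (projPair_surjective heq1 heq2 hne)
    (by rw [orderOf_projPair heq1 heq2 hx, hord])
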